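/- Consider the n-player normalised total effort game (n ≥ 3) with β_1 < … < β_n in a 2-value equilibrium where player 1 contributes x_1 = β_1 − (n−1)·x_eq and players 2,…,n each contribute x_eq, with β_1/n < x_eq < β_1/(n−1). Then: (i) if some player k ≥ 2 unilaterally changes their contribution to x_{k0} ≥ 0 with x_{k0} ≠ x_eq, then player 1's best-response value to the deviated profile differs from x_1; (ii) if player 1 unilaterally changes their contribution to x_{k0} ≥ 0 with x_{k0} ≠ x_1, and moreover x_{k0} < x_eq, β_j > (n−2)·x_eq + x_{k0} + max(x_eq, x_{k0}) for all 2 ≤ j ≤ n, and (n−1)·x_{k0} < β_2, then every player j ≥ 2's best-response value to the deviated profile still equals x_eq. -/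
import Mathlib


/-- Maximum of the contributions of the players other than `j`. -/
noncomputable def othersMax {m : ℕ} (y : Fin m → ℝ) (j : Fin m) : ℝ :=
  ⨆ i : {i : Fin m // i ≠ j}, y i.val

/-- Sum of the contributions of the players other than `j`. -/
noncomputable def othersSum {m : ℕ} (y : Fin m → ℝ) (j : Fin m) : ℝ :=
  ∑ i ∈ Finset.univ.erase j, y i

/-- Best-response value of a player with benefit-cost ratio `β` against the profile `y`:
`max(0, min(M, β − S))` where `M` and `S` are the maximum and the sum of the other
players' contributions. -/
noncomputable def bestResp {m : ℕ} (β : ℝ) (y : Fin m → ℝ) (j : Fin m) : ℝ :=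
  max 0 (min (othersMax y j) (β - othersSum y j))

lemma othersSum_eq {m : ℕ} (hm : 3 ≤ m) (y : Fin m → ℝ) (j p : Fin m) (hpj : p ≠ j)
    (a b : ℝ) (hp : y p = a) (hb : ∀ i, i ≠ j → i ≠ p → y i = b) :
    othersSum y j = a + ((m : ℝ) - 2) * b := by
  unfold othersSum
  have hpmem : p ∈ Finset.univ.erase j := Finset.mem_erase.2 ⟨hpj, Finset.mem_univ p⟩
  rw [← Finset.add_sum_erase _ y hpmem, hp]
  congr 1
  have hall : ∀ i ∈ (Finset.univ.erase j).erase p, y i = b := by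
    intro i hi
    obtain ⟨hip, hij⟩ := Finset.mem_erase.1 hi
    exact hb i (Finset.mem_erase.1 hij).1 hip
  rw [Finset.sum_congr rfl hall, Finset.sum_const, Finset.card_erase_of_mem hpmem,
    Finset.card_erase_of_mem (Finset.mem_univ j), Finset.card_univ, Fintype.card_fin,
    nsmul_eq_mul]
  congr 1
  have : ((m - 1 - 1 : ℕ) : ℝ) = (m : ℝ) - 2 := by
    rw [Nat.sub_sub, Nat.cast_sub (by omega)]
    norm_num
  rw [this]

lemma othersMax_eq {m : ℕ} (y : Fin m → ℝ) (j : Fin m) (M : ℝ)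
    (hub : ∀ i, i ≠ j → y i ≤ M) (hex : ∃ i, i ≠ j ∧ y i = M) :
    othersMax y j = M := by
  obtain ⟨i0, hi0, hyi0⟩ := hex
  have : Nonempty {i : Fin m // i ≠ j} := ⟨⟨i0, hi0⟩⟩
  unfold othersMax
  apply le_antisymm
  · exact ciSup_le fun i => hub i.val i.prop
  · rw [← hyi0]
    exact le_ciSup (f := fun i : {i : Fin m // i ≠ j} => y i.val)
      (Finite.bddAbove_range _) ⟨i0, hi0⟩

lemma othersMax_two {m : ℕ} (hm : 3 ≤ m) (y : Fin m → ℝ) (j p : Fin m) (hpj : p ≠ j)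
    (a b : ℝ) (hp : y p = a) (hb : ∀ i, i ≠ j → i ≠ p → y i = b) :
    othersMax y j = max a b := by
  have hpmem : p ∈ Finset.univ.erase j := Finset.mem_erase.2 ⟨hpj, Finset.mem_univ p⟩
  have hcard : ((Finset.univ.erase j).erase p).card = m - 1 - 1 := by
    rw [Finset.card_erase_of_mem hpmem, Finset.card_erase_of_mem (Finset.mem_univ j),
      Finset.card_univ, Fintype.card_fin]
  have hne : ((Finset.univ.erase j).erase p).Nonempty := by
    rw [← Finset.card_pos, hcard]; omega
  obtain ⟨i1, hi1⟩ := hne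
  obtain ⟨hi1p, hi1j⟩ := Finset.mem_erase.1 hi1
  have hi1j' : i1 ≠ j := (Finset.mem_erase.1 hi1j).1
  apply othersMax_eq
  · intro i hij
    by_cases hip : i = p
    · rw [hip, hp]; exact le_max_left a b
    · rw [hb i hij hip]; exact le_max_right a b
  · rcases le_total a b with h | h
    · exact ⟨i1, hi1j', by rw [hb i1 hi1j' hi1p, max_eq_right h]⟩
    · exact ⟨p, hpj, by rw [hp, max_eq_left h]⟩

theorem deviation_aux (n : ℕ) (hn : 3 ≤ n) (v c : Fin n → ℝ)
    (hv : ∀ i, 0 < v i) (hc : ∀ i, 0 < c i)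
    (h0 : 0 < n) (h1n : 1 < n)
    (xeq : ℝ)
    (h1 : (v ⟨0,h0⟩ / c ⟨0,h0⟩) / (n : ℝ) < xeq)
    (h2 : xeq < (v ⟨0,h0⟩ / c ⟨0,h0⟩) / ((n : ℝ) - 1))
    (x₁ : ℝ) (hx₁ : x₁ = v ⟨0,h0⟩ / c ⟨0,h0⟩ - ((n:ℝ)-1) * xeq)
    (xx : Fin n → ℝ) (hxx : xx = fun j : Fin n => if (j:ℕ) = 0 then x₁ else xeq) :
    (∀ k : Fin n, k ≠ ⟨0,h0⟩ → ∀ xk0 : ℝ, 0 ≤ xk0 → xk0 ≠ xeq →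
        bestResp (v ⟨0,h0⟩ / c ⟨0,h0⟩) (Function.update xx k xk0) ⟨0,h0⟩ ≠ x₁) ∧
    (∀ xk0 : ℝ, 0 ≤ xk0 → xk0 ≠ x₁ → xk0 < xeq →
        (∀ j : Fin n, j ≠ ⟨0,h0⟩ → ((n:ℝ)-2) * xeq + xk0 + max xeq xk0 < v j / c j) →
        ((n:ℝ)-1) * xk0 < v ⟨1,h1n⟩ / c ⟨1,h1n⟩ →
        ∀ j : Fin n, j ≠ ⟨0,h0⟩ →
          bestResp (v j / c j) (Function.update xx ⟨0,h0⟩ xk0) j = xeq) := by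
  set i0 : Fin n := ⟨0, h0⟩ with hi0def
  set β0 : ℝ := v i0 / c i0 with hβ0def
  have hnR : (3:ℝ) ≤ (n:ℝ) := by exact_mod_cast hn
  have hβ0pos : 0 < β0 := div_pos (hv i0) (hc i0)
  have hxeqpos : 0 < xeq := lt_trans (div_pos hβ0pos (by linarith)) h1
  have hβlt : β0 < (n:ℝ) * xeq := by
    have := (div_lt_iff₀ (by linarith : (0:ℝ) < (n:ℝ))).1 h1
    linarith
  have hβgt : ((n:ℝ) - 1) * xeq < β0 := by
    have := (lt_div_iff₀ (by linarith : (0:ℝ) < (n:ℝ) - 1)).1 h2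
    linarith
  have hx1pos : 0 < x₁ := by rw [hx₁]; linarith
  have hx1lt : x₁ < xeq := by rw [hx₁]; nlinarith
  have hxxval : ∀ i : Fin n, i ≠ i0 → xx i = xeq := by
    intro i hi
    rw [hxx]
    simp only []
    rw [if_neg (fun h => hi (Fin.ext h))]
  constructor
  · intro k hk xk0 hxk0 hne
    set y : Fin n → ℝ := Function.update xx k xk0 with hydef
    have hyk : y k = xk0 := Function.update_self _ _ _
    have hyo : ∀ i, i ≠ i0 → i ≠ k → y i = xeq := by
      intro i hij hik
      rw [hydef, Function.update_of_ne hik, hxxval i hij]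
    have hS : othersSum y i0 = xk0 + ((n:ℝ)-2)*xeq :=
      othersSum_eq hn y i0 k hk xk0 xeq hyk hyo
    have hM : othersMax y i0 = max xk0 xeq :=
      othersMax_two hn y i0 k hk xk0 xeq hyk hyo
    unfold bestResp
    rw [hS, hM]
    have hdiff : β0 - (xk0 + ((n:ℝ)-2)*xeq) = x₁ + xeq - xk0 := by rw [hx₁]; ring
    rw [hdiff]
    rcases lt_or_gt_of_ne hne with h | h
    · -- xk0 < xeq : best response strictly above x₁
      have h1' : x₁ < min (max xk0 xeq) (x₁ + xeq - xk0) := by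
        apply lt_min
        · calc x₁ < xeq := hx1lt
            _ ≤ max xk0 xeq := le_max_right _ _
        · linarith
      have : x₁ < max 0 (min (max xk0 xeq) (x₁ + xeq - xk0)) :=
        lt_of_lt_of_le h1' (le_max_right _ _)
      exact this.ne'
    · -- xk0 > xeq : best response strictly below x₁
      have : max 0 (min (max xk0 xeq) (x₁ + xeq - xk0)) < x₁ := by
        apply max_lt hx1pos
        exact lt_of_le_of_lt (min_le_right _ _) (by linarith)
      exact this.ne
  · intro xk0 hxk0 _ hlt hβj _ j hj
    set y : Fin n → ℝ := Function.update xx i0 xk0 with hydef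
    have hy0 : y i0 = xk0 := Function.update_self _ _ _
    have hyo : ∀ i, i ≠ j → i ≠ i0 → y i = xeq := by
      intro i _ hii0
      rw [hydef, Function.update_of_ne hii0, hxxval i hii0]
    have h0j : i0 ≠ j := fun h => hj h.symm
    have hS : othersSum y j = xk0 + ((n:ℝ)-2)*xeq :=
      othersSum_eq hn y j i0 h0j xk0 xeq hy0 hyo
    have hM : othersMax y j = max xk0 xeq :=
      othersMax_two hn y j i0 h0j xk0 xeq hy0 hyo
    unfold bestResp
    rw [hS, hM, max_eq_right (le_of_lt hlt)]
    have hbig : xeq < v j / c j - (xk0 + ((n:ℝ)-2)*xeq) := by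
      have := hβj j hj
      rw [max_eq_left (le_of_lt hlt)] at this
      linarith
    rw [min_eq_left (le_of_lt hbig), max_eq_right (le_of_lt hxeqpos)]

/-- Deviation from a 2-value equilibrium: in the `n`-player NTEG (`n ≥ 3`) with
`β₁ < … < β_n`, player 1 (index `0`) contributes `x₁ = β₁ − (n−1)·x_eq` and players
`2, …, n` contribute `x_eq`, with `β₁/n < x_eq < β₁/(n−1)`. Then:
(i) if some player `k ≠ 0` deviates to `x_{k0} ≥ 0` with `x_{k0} ≠ x_eq`, player 1's
best-response value to the deviated profile differs from `x₁`;
(ii) if player 1 deviates to `x_{k0} ≥ 0` with `x_{k0} ≠ x₁`, and moreover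
`x_{k0} < x_eq`, `β_j > (n−2)·x_eq + x_{k0} + max(x_eq, x_{k0})` for all `j ≥ 2`, and
`(n−1)·x_{k0} < β₂`, then every player `j ≥ 2`'s best-response value to the deviated
profile still equals `x_eq`. -/
theorem deviation_two_value (n : ℕ) (hn : 3 ≤ n) (v c : Fin n → ℝ)
    (hv : ∀ i, 0 < v i) (hc : ∀ i, 0 < c i)
    (hβ : StrictMono (fun i : Fin n => v i / c i))
    (xeq : ℝ)
    (h1 : (v ⟨0, by omega⟩ / c ⟨0, by omega⟩) / (n : ℝ) < xeq)
    (h2 : xeq < (v ⟨0, by omega⟩ / c ⟨0, by omega⟩) / ((n : ℝ) - 1)) :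
    ∀ x₁ : ℝ, x₁ = v ⟨0, by omega⟩ / c ⟨0, by omega⟩ - ((n : ℝ) - 1) * xeq →
      ∀ xx : Fin n → ℝ, xx = (fun j : Fin n => if (j : ℕ) = 0 then x₁ else xeq) →
        ((∀ k : Fin n, k ≠ ⟨0, by omega⟩ → ∀ xk0 : ℝ, 0 ≤ xk0 → xk0 ≠ xeq →
            bestResp (v ⟨0, by omega⟩ / c ⟨0, by omega⟩)
              (Function.update xx k xk0) ⟨0, by omega⟩ ≠ x₁) ∧
          (∀ xk0 : ℝ, 0 ≤ xk0 → xk0 ≠ x₁ → xk0 < xeq →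
            (∀ j : Fin n, j ≠ ⟨0, by omega⟩ →
              ((n : ℝ) - 2) * xeq + xk0 + max xeq xk0 < v j / c j) →
            ((n : ℝ) - 1) * xk0 < v ⟨1, by omega⟩ / c ⟨1, by omega⟩ →
            ∀ j : Fin n, j ≠ ⟨0, by omega⟩ →
              bestResp (v j / c j) (Function.update xx ⟨0, by omega⟩ xk0) j = xeq)) := by
  intro x₁ hx₁ xx hxx
  exact deviation_aux n hn v c hv hc (by omega) (by omega) xeq h1 h2 x₁ hx₁ xx hxx
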